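/- arXiv:1201.5286 — 2 statements merged into one kernel-verified Lean document; each statement's English description precedes it below -/
import Mathlib

section
/- Let G be a group and let β, λ ∈ G satisfy the braid relation λβλ = βλβ. Then for every natural number m ≥ 1, λ^(−m) β⁻¹ λ^m β = λ^(1−m) β^m λ⁻¹. -/
theorem braid_monodromy_identity {G : Type*} [Group G] (β lam : G)
    (hbraid : lam * β * lam = β * lam * β) (m : ℕ) (hm : 1 ≤ m) :
    lam ^ (-(m : ℤ)) * β⁻¹ * lam ^ (m : ℤ) * β
      = lam ^ (1 - (m : ℤ)) * β ^ (m : ℤ) * lam⁻¹ := by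
  have key2 : lam⁻¹ * β⁻¹ * lam = β * lam⁻¹ * β⁻¹ := by
    calc lam⁻¹ * β⁻¹ * lam
        = lam⁻¹ * β⁻¹ * (lam * β * lam) * (lam⁻¹ * β⁻¹) := by group
      _ = lam⁻¹ * β⁻¹ * (β * lam * β) * (lam⁻¹ * β⁻¹) := by rw [hbraid]
      _ = β * lam⁻¹ * β⁻¹ := by group
  have aux : ∀ n : ℕ, lam ^ (-(n : ℤ)) * β⁻¹ * lam ^ (n : ℤ)
      = lam ^ (1 - (n : ℤ)) * β ^ (n : ℤ) * lam⁻¹ * β⁻¹ := by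
    intro n
    induction n with
    | zero => group
    | succ n ih =>
      have step : lam ^ (-((n + 1 : ℕ) : ℤ)) * β⁻¹ * lam ^ (((n + 1 : ℕ)) : ℤ)
          = lam⁻¹ * (lam ^ (-(n : ℤ)) * β⁻¹ * lam ^ (n : ℤ)) * lam := by
        push_cast
        group
      rw [step, ih]
      calc lam⁻¹ * (lam ^ (1 - (n : ℤ)) * β ^ (n : ℤ) * lam⁻¹ * β⁻¹) * lam
          = lam ^ (-(n : ℤ)) * β ^ (n : ℤ) * (lam⁻¹ * β⁻¹ * lam) := by group
        _ = lam ^ (-(n : ℤ)) * β ^ (n : ℤ) * (β * lam⁻¹ * β⁻¹) := by rw [key2]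
        _ = lam ^ (1 - ((n + 1 : ℕ) : ℤ)) * β ^ (((n + 1 : ℕ)) : ℤ) * lam⁻¹ * β⁻¹ := by
            push_cast
            group
  have h := aux m
  calc lam ^ (-(m : ℤ)) * β⁻¹ * lam ^ (m : ℤ) * β
      = (lam ^ (-(m : ℤ)) * β⁻¹ * lam ^ (m : ℤ)) * β := by group
    _ = (lam ^ (1 - (m : ℤ)) * β ^ (m : ℤ) * lam⁻¹ * β⁻¹) * β := by rw [h]
    _ = lam ^ (1 - (m : ℤ)) * β ^ (m : ℤ) * lam⁻¹ := by group
end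

section
/- Define the negative continued fraction [a₀, …, a_ℓ] = a₀ − 1/(a₁ − 1/(⋯ − 1/a_ℓ)). For all integers n ≥ 2 and m ≥ 1, the rational number 1 + (mn+1)/(mn+1−m) has negative continued fraction expansion [3, 2, …, 2, m+1], where the string of 2's has length n−2. -/
/-- The negative continued fraction `[a₀, a₁, …, a_ℓ] = a₀ - 1/(a₁ - 1/(⋯ - 1/a_ℓ))`. -/
def ncf : List ℚ → ℚ
  | [] => 0
  | [a] => a
  | a :: b :: rest => a - 1 / ncf (b :: rest)

lemma ncf_cons (a : ℚ) (l : List ℚ) (hl : l ≠ []) : ncf (a :: l) = a - 1 / ncf l := by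
  cases l with
  | nil => exact absurd rfl hl
  | cons b t => rfl

lemma ncf_aux (m : ℕ) : ∀ k : ℕ,
    ncf (List.replicate k (2 : ℚ) ++ [(m : ℚ) + 1])
      = (((k : ℚ) + 1) * m + 1) / ((k : ℚ) * m + 1) := by
  intro k
  induction k with
  | zero => simp [ncf]
  | succ k ih =>
    have hpos : (0 : ℚ) < (k : ℚ) * m + 1 := by positivity
    have hpos2 : (0 : ℚ) < ((k : ℚ) + 1) * m + 1 := by positivity
    rw [List.replicate_succ, List.cons_append,
      ncf_cons _ _ (by simp), ih]
    push_cast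
    rw [one_div_div]
    field_simp
    ring

theorem ncf_surgery_expansion (n m : ℕ) (hn : 2 ≤ n) (hm : 1 ≤ m) :
    ncf ((3 : ℚ) :: (List.replicate (n - 2) (2 : ℚ) ++ [(m : ℚ) + 1]))
      = 1 + ((m : ℚ) * n + 1) / ((m : ℚ) * n + 1 - m) := by
  obtain ⟨k, rfl⟩ : ∃ k, n = k + 2 := ⟨n - 2, by omega⟩
  have h1 : (k + 2) - 2 = k := by omega
  rw [h1, ncf_cons _ _ (by simp), ncf_aux]
  have hm' : (1 : ℚ) ≤ (m : ℚ) := by exact_mod_cast hm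
  have hpos : (0 : ℚ) < (k : ℚ) * m + 1 := by positivity
  have hpos2 : (0 : ℚ) < ((k : ℚ) + 1) * m + 1 := by positivity
  have hpos3 : (0 : ℚ) < (m : ℚ) * (k + 2) + 1 - m := by nlinarith
  push_cast
  field_simp
  ring
end
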